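/- arXiv:0803.2223 — 3 statements merged into one kernel-verified Lean document; each statement's English description precedes it below -/
import Mathlib

section
/- Let T ∈ (0,∞], let ξ : [0,T) → ℝ be continuous, and let x₁ < x₂ be real numbers with ξ(0) < x₁. Suppose ψ₁, ψ₂ : [0,T) → ℝ are differentiable with ψⱼ(0) = xⱼ and ψⱼ′(t) = coth₂(ψⱼ(t) − ξ(t)) for all t ∈ [0,T), and suppose ξ(t) < ψ₁(t) < ψ₂(t) for all t ∈ [0,T). Then for every t ∈ [0,T) one has 0 ≤ ∫₀ᵗ coth₂(ψ₁(s) − ξ(s)) ds − ∫₀ᵗ coth₂(ψ₂(s) − ξ(s)) ds < x₂ − x₁; in particular the absolute value of the difference of the two integrals is strictly less than |x₁ − x₂|. -/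
/-- `coth₂ x = coth (x/2)`. -/
noncomputable def coth2 (x : ℝ) : ℝ := Real.cosh (x / 2) / Real.sinh (x / 2)

lemma coth2_anti {a b : ℝ} (ha : 0 < a) (hab : a ≤ b) : coth2 b ≤ coth2 a := by
  unfold coth2
  have hu : 0 < a / 2 := by linarith
  have hv : 0 < b / 2 := by linarith
  rw [div_le_div_iff₀ (Real.sinh_pos_iff.mpr hv) (Real.sinh_pos_iff.mpr hu)]
  have h1 : 0 ≤ Real.sinh (b / 2 - a / 2) := Real.sinh_nonneg_iff.mpr (by linarith)
  rw [Real.sinh_sub] at h1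
  nlinarith

/-- For two ordered real trajectories of the strip Loewner flow started
from `x₁ < x₂` (with the driver below both), the difference of the time integrals of
`coth₂(ψⱼ(s) − ξ(s))` is nonnegative and strictly less than `x₂ − x₁`; in particular
its absolute value is strictly less than `|x₁ − x₂|`. -/
theorem stmt0 (T : EReal) (hT : 0 < T) (ξ ψ₁ ψ₂ : ℝ → ℝ) (x₁ x₂ : ℝ)
    (hx : x₁ < x₂) (hξx : ξ 0 < x₁)
    (hξcont : ContinuousOn ξ {t : ℝ | 0 ≤ t ∧ (t : EReal) < T})
    (hψ₁0 : ψ₁ 0 = x₁) (hψ₂0 : ψ₂ 0 = x₂)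
    (hψ₁ : ∀ t : ℝ, 0 ≤ t → (t : EReal) < T →
      HasDerivAt ψ₁ (coth2 (ψ₁ t - ξ t)) t)
    (hψ₂ : ∀ t : ℝ, 0 ≤ t → (t : EReal) < T →
      HasDerivAt ψ₂ (coth2 (ψ₂ t - ξ t)) t)
    (horder : ∀ t : ℝ, 0 ≤ t → (t : EReal) < T → ξ t < ψ₁ t ∧ ψ₁ t < ψ₂ t) :
    ∀ t : ℝ, 0 ≤ t → (t : EReal) < T →
      (0 ≤ (∫ s in (0:ℝ)..t, coth2 (ψ₁ s - ξ s)) -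
            ∫ s in (0:ℝ)..t, coth2 (ψ₂ s - ξ s)) ∧
      ((∫ s in (0:ℝ)..t, coth2 (ψ₁ s - ξ s)) -
            (∫ s in (0:ℝ)..t, coth2 (ψ₂ s - ξ s)) < x₂ - x₁) ∧
      |(∫ s in (0:ℝ)..t, coth2 (ψ₁ s - ξ s)) -
            ∫ s in (0:ℝ)..t, coth2 (ψ₂ s - ξ s)| < |x₁ - x₂| := by
  intro t ht htT
  have hsub : Set.Icc (0:ℝ) t ⊆ {s : ℝ | 0 ≤ s ∧ (s : EReal) < T} := fun s hs =>
    ⟨hs.1, lt_of_le_of_lt (EReal.coe_le_coe_iff.mpr hs.2) htT⟩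
  -- continuity of integrands
  have key : ∀ (ψ : ℝ → ℝ), (∀ s : ℝ, 0 ≤ s → (s : EReal) < T →
      HasDerivAt ψ (coth2 (ψ s - ξ s)) s) → (∀ s : ℝ, 0 ≤ s → (s : EReal) < T → ξ s < ψ s) →
      ContinuousOn (fun s => coth2 (ψ s - ξ s)) (Set.Icc 0 t) := by
    intro ψ hψ hord
    have hψc : ContinuousOn ψ (Set.Icc 0 t) := fun s hs =>
      ((hψ s hs.1 (hsub hs).2).continuousAt).continuousWithinAt
    have h1 : ContinuousOn (fun s => (ψ s - ξ s) / 2) (Set.Icc 0 t) :=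
      (hψc.sub (hξcont.mono hsub)).div_const 2
    exact (Real.continuous_cosh.comp_continuousOn h1).div
      (Real.continuous_sinh.comp_continuousOn h1)
      (fun s hs => ne_of_gt (Real.sinh_pos_iff.mpr (by
        have := hord s hs.1 (hsub hs).2; linarith)))
  have hc₁ := key ψ₁ hψ₁ (fun s h1 h2 => (horder s h1 h2).1)
  have hc₂ := key ψ₂ hψ₂ (fun s h1 h2 => lt_trans (horder s h1 h2).1 (horder s h1 h2).2)
  have huIcc : Set.uIcc (0:ℝ) t = Set.Icc 0 t := Set.uIcc_of_le ht
  have hi₁ : IntervalIntegrable (fun s => coth2 (ψ₁ s - ξ s)) MeasureTheory.volume 0 t :=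
    (hc₁.mono huIcc.subset).intervalIntegrable
  have hi₂ : IntervalIntegrable (fun s => coth2 (ψ₂ s - ξ s)) MeasureTheory.volume 0 t :=
    (hc₂.mono huIcc.subset).intervalIntegrable
  -- FTC
  have hF₁ : (∫ s in (0:ℝ)..t, coth2 (ψ₁ s - ξ s)) = ψ₁ t - x₁ := by
    rw [intervalIntegral.integral_eq_sub_of_hasDerivAt
      (fun s hs => hψ₁ s (huIcc ▸ hs).1 (hsub (huIcc ▸ hs)).2) hi₁, hψ₁0]
  have hF₂ : (∫ s in (0:ℝ)..t, coth2 (ψ₂ s - ξ s)) = ψ₂ t - x₂ := by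
    rw [intervalIntegral.integral_eq_sub_of_hasDerivAt
      (fun s hs => hψ₂ s (huIcc ▸ hs).1 (hsub (huIcc ▸ hs)).2) hi₂, hψ₂0]
  have hmono : (∫ s in (0:ℝ)..t, coth2 (ψ₂ s - ξ s)) ≤
      ∫ s in (0:ℝ)..t, coth2 (ψ₁ s - ξ s) := by
    apply intervalIntegral.integral_mono_on ht hi₂ hi₁
    intro s hs
    have h := horder s hs.1 (hsub hs).2
    exact coth2_anti (by linarith [h.1]) (by linarith [h.2])
  have h0 : 0 ≤ (∫ s in (0:ℝ)..t, coth2 (ψ₁ s - ξ s)) -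
      ∫ s in (0:ℝ)..t, coth2 (ψ₂ s - ξ s) := by linarith
  have hlt : (∫ s in (0:ℝ)..t, coth2 (ψ₁ s - ξ s)) -
      (∫ s in (0:ℝ)..t, coth2 (ψ₂ s - ξ s)) < x₂ - x₁ := by
    have := (horder t ht htT).2
    rw [hF₁, hF₂]; linarith
  refine ⟨h0, hlt, ?_⟩
  rw [abs_of_nonneg h0, abs_of_neg (by linarith : x₁ - x₂ < 0)]
  linarith
end

section
/- Let T ∈ (0,∞], let ξ : [0,T) → ℝ be continuous, let N ≥ 1, and let p₁ < p₂ < ⋯ < p_N be real numbers with ξ(0) < p₁. Suppose ψ₁, …, ψ_N : [0,T) → ℝ are differentiable with ψₘ(0) = pₘ, ψₘ′(t) = coth₂(ψₘ(t) − ξ(t)) for all t, and ξ(t) < ψ₁(t) < ⋯ < ψ_N(t) for all t ∈ [0,T). Let ρ₁, …, ρ_N ∈ ℝ, χ = ρ₁ + ⋯ + ρ_N, and M = Σₘ |ρₘ|·(pₘ − p₁). Then for all 0 ≤ t₁ ≤ t₂ < T, Σₘ (ρₘ/2)·∫_{t₁}^{t₂} coth₂(ψₘ(s) − ξ(s)) ds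 ≥ (χ/2)·∫_{t₁}^{t₂} coth₂(ψ₁(s) − ξ(s)) ds − M. -/
open scoped BigOperators

lemma coth2_anti_s3 {x y : ℝ} (hx : 0 < x) (hxy : x ≤ y) : coth2 y ≤ coth2 x := by
  have hy : 0 < y := lt_of_lt_of_le hx hxy
  have hsx : 0 < Real.sinh (x/2) := Real.sinh_pos_iff.2 (by linarith)
  have hsy : 0 < Real.sinh (y/2) := Real.sinh_pos_iff.2 (by linarith)
  rw [coth2, coth2, div_le_div_iff₀ hsy hsx]
  have h : 0 ≤ Real.sinh (y/2 - x/2) := Real.sinh_nonneg_iff.2 (by linarith)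
  rw [Real.sinh_sub] at h
  nlinarith

/-- the weighted-sum estimate for strip Loewner trajectories of force
points `p₁ < ⋯ < p_N` lying above the driver: with `χ = Σ ρₘ` and
`M = Σ |ρₘ|(pₘ − p₁)`, for all `0 ≤ t₁ ≤ t₂ < T`,
`Σₘ (ρₘ/2) ∫_{t₁}^{t₂} coth₂(ψₘ − ξ) ≥ (χ/2) ∫_{t₁}^{t₂} coth₂(ψ₁ − ξ) − M`. -/
theorem stmt3 (T : EReal) (hT : 0 < T) (ξ : ℝ → ℝ) (N : ℕ) (hN : 0 < N)
    (p : Fin N → ℝ) (hp : StrictMono p) (hξp : ξ 0 < p ⟨0, hN⟩)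
    (hξcont : ContinuousOn ξ {t : ℝ | 0 ≤ t ∧ (t : EReal) < T})
    (ψ : Fin N → ℝ → ℝ) (hψ0 : ∀ m : Fin N, ψ m 0 = p m)
    (hψ : ∀ m : Fin N, ∀ t : ℝ, 0 ≤ t → (t : EReal) < T →
      HasDerivAt (ψ m) (coth2 (ψ m t - ξ t)) t)
    (horder : ∀ t : ℝ, 0 ≤ t → (t : EReal) < T →
      ξ t < ψ ⟨0, hN⟩ t ∧ StrictMono (fun m : Fin N => ψ m t))
    (ρ : Fin N → ℝ) (χ M : ℝ) (hχ : χ = ∑ m : Fin N, ρ m)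
    (hM : M = ∑ m : Fin N, |ρ m| * (p m - p ⟨0, hN⟩)) :
    ∀ t₁ t₂ : ℝ, 0 ≤ t₁ → t₁ ≤ t₂ → (t₂ : EReal) < T →
      (∑ m : Fin N, (ρ m / 2) * ∫ s in t₁..t₂, coth2 (ψ m s - ξ s)) ≥
        (χ / 2) * (∫ s in t₁..t₂, coth2 (ψ ⟨0, hN⟩ s - ξ s)) - M := by
  intro t₁ t₂ ht₁ ht12 ht₂
  set z : Fin N := ⟨0, hN⟩ with hz
  -- membership facts
  have hmem : ∀ s ∈ Set.Icc (0:ℝ) t₂, 0 ≤ s ∧ (s : EReal) < T := by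
    intro s hs
    exact ⟨hs.1, lt_of_le_of_lt (by exact_mod_cast hs.2) ht₂⟩
  -- ordering: ξ s < ψ m s for s in the domain
  have hgap : ∀ (m : Fin N), ∀ s ∈ Set.Icc (0:ℝ) t₂, ξ s < ψ m s := by
    intro m s hs
    obtain ⟨hs0, hsT⟩ := hmem s hs
    have h := horder s hs0 hsT
    exact lt_of_lt_of_le h.1 (h.2.monotone (by simp [hz, Fin.le_def]))
  have hgap2 : ∀ (m : Fin N), ∀ s ∈ Set.Icc (0:ℝ) t₂, ψ z s ≤ ψ m s := by
    intro m s hs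
    obtain ⟨hs0, hsT⟩ := hmem s hs
    exact (horder s hs0 hsT).2.monotone (by simp [hz, Fin.le_def])
  -- continuity of integrand on Icc 0 t₂
  have hψcont : ∀ (m : Fin N), ContinuousOn (ψ m) (Set.Icc (0:ℝ) t₂) := by
    intro m s hs
    obtain ⟨hs0, hsT⟩ := hmem s hs
    exact (hψ m s hs0 hsT).continuousAt.continuousWithinAt
  have hξcont' : ContinuousOn ξ (Set.Icc (0:ℝ) t₂) :=
    hξcont.mono (fun s hs => hmem s hs)
  have hcont : ∀ (m : Fin N),
      ContinuousOn (fun s => coth2 (ψ m s - ξ s)) (Set.Icc (0:ℝ) t₂) := by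
    intro m
    have h1 : ContinuousOn (fun s => (ψ m s - ξ s) / 2) (Set.Icc (0:ℝ) t₂) :=
      ((hψcont m).sub hξcont').div_const 2
    apply ContinuousOn.div
    · exact Real.continuous_cosh.comp_continuousOn h1
    · exact Real.continuous_sinh.comp_continuousOn h1
    · intro s hs
      have := hgap m s hs
      exact (Real.sinh_pos_iff.2 (by linarith)).ne'
  -- integral value
  have hIcc : Set.uIcc t₁ t₂ ⊆ Set.Icc (0:ℝ) t₂ := by
    rw [Set.uIcc_of_le ht12]
    exact Set.Icc_subset_Icc ht₁ le_rfl
  have hI : ∀ (m : Fin N),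
      (∫ s in t₁..t₂, coth2 (ψ m s - ξ s)) = ψ m t₂ - ψ m t₁ := by
    intro m
    apply intervalIntegral.integral_eq_sub_of_hasDerivAt
    · intro s hs
      obtain ⟨hs0, hsT⟩ := hmem s (hIcc hs)
      exact hψ m s hs0 hsT
    · exact ((hcont m).mono hIcc).intervalIntegrable
  -- gap antitone
  have hanti : ∀ (m : Fin N),
      AntitoneOn (fun s => ψ m s - ψ z s) (Set.Icc (0:ℝ) t₂) := by
    intro m
    have hd : ∀ s ∈ Set.Icc (0:ℝ) t₂,
        HasDerivAt (fun s => ψ m s - ψ z s)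
          (coth2 (ψ m s - ξ s) - coth2 (ψ z s - ξ s)) s := by
      intro s hs
      obtain ⟨hs0, hsT⟩ := hmem s hs
      exact (hψ m s hs0 hsT).sub (hψ z s hs0 hsT)
    apply antitoneOn_of_deriv_nonpos (convex_Icc 0 t₂)
    · exact fun s hs => (hd s hs).continuousAt.continuousWithinAt
    · intro s hs
      have hs' : s ∈ Set.Icc (0:ℝ) t₂ := interior_subset hs
      exact ((hd s hs').differentiableAt).differentiableWithinAt
    · intro s hs
      have hs' : s ∈ Set.Icc (0:ℝ) t₂ := interior_subset hs
      rw [(hd s hs').deriv]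
      have h1 := hgap z s hs'
      have h2 := hgap2 m s hs'
      have := coth2_anti_s3 (x := ψ z s - ξ s) (y := ψ m s - ξ s)
        (by linarith) (by linarith)
      linarith
  -- per-term estimate
  have key : ∀ (m : Fin N),
      (ρ m / 2) * (∫ s in t₁..t₂, coth2 (ψ m s - ξ s)) ≥
        (ρ m / 2) * (∫ s in t₁..t₂, coth2 (ψ z s - ξ s))
          - |ρ m| * (p m - p z) := by
    intro m
    rw [hI m, hI z]
    set D : ℝ := (ψ m t₂ - ψ m t₁) - (ψ z t₂ - ψ z t₁) with hD
    have h1₂ : t₂ ∈ Set.Icc (0:ℝ) t₂ := ⟨le_trans ht₁ ht12, le_rfl⟩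
    have h1₁ : t₁ ∈ Set.Icc (0:ℝ) t₂ := ⟨ht₁, ht12⟩
    have h0 : (0:ℝ) ∈ Set.Icc (0:ℝ) t₂ := ⟨le_rfl, le_trans ht₁ ht12⟩
    have hDle : D ≤ 0 := by
      have := hanti m h1₁ h1₂ ht12
      simp only at this
      simp only [hD]; linarith
    have hDge : -(p m - p z) ≤ D := by
      have h1 := hanti m h0 h1₁ ht₁
      have h2 := hgap2 m t₂ h1₂
      simp only at h1
      rw [hψ0 m, hψ0 z] at h1
      simp only [hD]; linarith
    have hpz : 0 ≤ p m - p z := by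
      have := hp.monotone (a := z) (b := m) (by simp [hz, Fin.le_def])
      linarith
    have habs : |D| ≤ p m - p z := abs_le.2 ⟨hDge, by linarith⟩
    have : -( |ρ m| * (p m - p z)) ≤ (ρ m / 2) * D := by
      have h1 : |(ρ m / 2) * D| ≤ |ρ m| * (p m - p z) := by
        rw [abs_mul]
        have : |ρ m / 2| ≤ |ρ m| := by
          rw [abs_div]
          simp only [abs_two]
          linarith [abs_nonneg (ρ m), div_le_self (abs_nonneg (ρ m)) (by norm_num : (1:ℝ) ≤ 2)]
        exact mul_le_mul this habs (abs_nonneg D) (abs_nonneg (ρ m))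
      linarith [neg_abs_le ((ρ m / 2) * D), h1]
    simp only [hD] at this ⊢
    linarith
  -- sum up
  calc (∑ m : Fin N, (ρ m / 2) * ∫ s in t₁..t₂, coth2 (ψ m s - ξ s))
      ≥ ∑ m : Fin N, ((ρ m / 2) * (∫ s in t₁..t₂, coth2 (ψ z s - ξ s))
          - |ρ m| * (p m - p z)) := Finset.sum_le_sum (fun m _ => key m)
    _ = (χ / 2) * (∫ s in t₁..t₂, coth2 (ψ z s - ξ s)) - M := by
        rw [Finset.sum_sub_distrib, ← Finset.sum_mul, hM, hχ, Finset.sum_div]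
end

section
/- Let κ > 4 and define h : ℝ → ℝ by h(x) = ∫₀ˣ cosh(s/2)^{8/κ − 2} ds. Then: (i) the integrand cosh(s/2)^{8/κ − 2} is integrable on ℝ; (ii) h is odd, strictly increasing, and bounded, and h maps ℝ onto the interval (−L, L), where L = ∫₀^∞ cosh(s/2)^{8/κ − 2} ds < ∞; (iii) for every x ∈ ℝ, (κ/2)·h″(x) + (κ/2 − 2)·h′(x)·tanh(x/2) = 0. -/
/-! Put `p = 8/κ - 2 < 0`. Since `cosh x ≥ eˣ/2`, the integrand is dominated by `2⁻ᵖ e^{p|s|/2}`,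
hence integrable. `h` is the primitive of an even, positive, continuous function, so it is odd,
strictly increasing and tends to `±L` at `±∞`; the intermediate value theorem gives its range.
Finally `h″ = (p/2) tanh(x/2) h′`, and `(κ/2)(p/2) = 2 - κ/2`. -/

open Real MeasureTheory Set Filter Topology

theorem rpow_cosh_le_two_rpow_mul_exp {p : ℝ} (hp : p ≤ 0) (x : ℝ) :
    cosh x ^ p ≤ 2 ^ (-p) * exp (p * x) := by
  have hexp_le : exp x / 2 ≤ cosh x := by
    rw [cosh_eq]
    linarith [(exp_pos (-x)).le]
  calc cosh x ^ p ≤ (exp x / 2) ^ p := rpow_le_rpow_of_nonpos (by positivity) hexp_le hp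
    _ = 2 ^ (-p) * exp (p * x) := by
      rw [div_rpow (exp_pos x).le zero_le_two, ← exp_mul, rpow_neg zero_le_two, mul_comm x,
        div_eq_inv_mul]

theorem integrable_rpow_cosh {p : ℝ} (hp : p < 0) : Integrable (fun x => cosh x ^ p) := by
  have hcont : Continuous (fun x => cosh x ^ p) :=
    continuous_cosh.rpow_const fun x => Or.inl (cosh_pos x).ne'
  refine hcont.locallyIntegrable.integrable_of_isBigO_atTop_of_norm_isNegInvariant
    (g := fun x => exp (p * x)) (.of_forall fun x => by simp) ?_
    ⟨Ioi 0, Ioi_mem_atTop 0, integrableOn_exp_mul_Ioi hp 0⟩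
  refine .of_bound (2 ^ (-p)) (.of_forall fun x => ?_)
  rw [norm_of_nonneg (rpow_nonneg (cosh_pos x).le p), norm_of_nonneg (exp_pos _).le]
  exact rpow_cosh_le_two_rpow_mul_exp hp.le x

theorem deriv_rpow_cosh_half (p x : ℝ) :
    deriv (fun s => cosh (s / 2) ^ p) x = p / 2 * tanh (x / 2) * cosh (x / 2) ^ p := by
  have hcosh : cosh (x / 2) ≠ 0 := (cosh_pos _).ne'
  rw [(((hasDerivAt_id' x).div_const 2).cosh.rpow_const (Or.inl hcosh)).deriv,
    rpow_sub_one hcosh, tanh_eq_sinh_div_cosh]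
  field_simp

section Primitive

variable {f : ℝ → ℝ}

theorem intervalIntegral_zero_neg_of_even (heven : ∀ x, f (-x) = f x) (x : ℝ) :
    ∫ s in (0 : ℝ)..-x, f s = -∫ s in (0 : ℝ)..x, f s := by
  have hflip := intervalIntegral.integral_comp_neg (a := x) (b := 0) f
  simp only [heven, neg_zero] at hflip
  rw [← intervalIntegral.integral_symm, hflip]

theorem strictMono_intervalIntegral_of_pos (hf : Continuous f) (hpos : ∀ x, 0 < f x) :
    StrictMono (fun x => ∫ s in (0 : ℝ)..x, f s) :=
  strictMono_of_hasDerivAt_pos (fun x => (hf.integral_hasStrictDerivAt 0 x).hasDerivAt) hpos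

end Primitive

theorem StrictMono.range_eq_Ioo_of_tendsto {α δ : Type*} [LinearOrder α] [Nonempty α]
    [NoMaxOrder α] [NoMinOrder α] [TopologicalSpace α] [PreconnectedSpace α]
    [LinearOrder δ] [TopologicalSpace δ] [OrderClosedTopology δ] {g : α → δ} {a b : δ}
    (hmono : StrictMono g) (hg : Continuous g) (hbot : Tendsto g atBot (𝓝 a))
    (htop : Tendsto g atTop (𝓝 b)) : range g = Ioo a b := by
  refine Subset.antisymm ?_ fun y hy => ?_
  · rintro _ ⟨x, rfl⟩
    obtain ⟨x₀, hx₀⟩ := exists_lt x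
    obtain ⟨x₁, hx₁⟩ := exists_gt x
    exact ⟨(hmono.monotone.le_of_tendsto hbot x₀).trans_lt (hmono hx₀),
      (hmono hx₁).trans_le (hmono.monotone.ge_of_tendsto htop x₁)⟩
  · exact mem_range_of_exists_le_of_exists_ge hg
      ((hbot.eventually (eventually_le_nhds hy.1)).exists)
      ((htop.eventually (eventually_ge_nhds hy.2)).exists)

/-- for `κ > 4`, the scale function `h(x) = ∫₀ˣ cosh(s/2)^(8/κ−2) ds`:
(i) the integrand is integrable on `ℝ`; (ii) `h` is odd, strictly increasing, and maps
`ℝ` onto `(−L, L)` where `L = ∫₀^∞ cosh(s/2)^(8/κ−2) ds` is finite; (iii) `h` satisfies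
`(κ/2)h″(x) + (κ/2 − 2)h′(x)tanh(x/2) = 0`. -/
theorem stmt8 (κ : ℝ) (hκ : 4 < κ) (h : ℝ → ℝ) (L : ℝ)
    (hh : ∀ x : ℝ, h x = ∫ s in (0:ℝ)..x, Real.cosh (s / 2) ^ (8 / κ - 2))
    (hL : L = ∫ s in Set.Ioi (0:ℝ), Real.cosh (s / 2) ^ (8 / κ - 2)) :
    MeasureTheory.Integrable (fun s : ℝ => Real.cosh (s / 2) ^ (8 / κ - 2)) ∧
    (∀ x : ℝ, h (-x) = -h x) ∧ StrictMono h ∧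
    MeasureTheory.IntegrableOn
      (fun s : ℝ => Real.cosh (s / 2) ^ (8 / κ - 2)) (Set.Ioi (0:ℝ)) ∧
    Set.range h = Set.Ioo (-L) L ∧
    (∀ x : ℝ, (κ / 2) * deriv (deriv h) x
        + (κ / 2 - 2) * deriv h x * Real.tanh (x / 2) = 0) := by
  have hp : 8 / κ - 2 < 0 := by
    rw [sub_neg, div_lt_iff₀ (by linarith)]
    linarith
  obtain rfl : h = fun x => ∫ s in (0:ℝ)..x, cosh (s / 2) ^ (8 / κ - 2) := funext hh
  subst hL
  have hcont : Continuous (fun s : ℝ => cosh (s / 2) ^ (8 / κ - 2)) :=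
    (continuous_cosh.comp (continuous_id.div_const 2)).rpow_const
      fun s => Or.inl (cosh_pos _).ne'
  have hint := (integrable_rpow_cosh hp).comp_div two_ne_zero
  have hodd := intervalIntegral_zero_neg_of_even (f := fun s : ℝ => cosh (s / 2) ^ (8 / κ - 2))
    fun s => by simp only [neg_div, cosh_neg]
  have hmono := strictMono_intervalIntegral_of_pos hcont fun s => rpow_pos_of_pos (cosh_pos _) _
  have htop := intervalIntegral_tendsto_integral_Ioi 0 hint.integrableOn tendsto_id
  have hbot : Tendsto (fun x => ∫ s in (0:ℝ)..x, cosh (s / 2) ^ (8 / κ - 2)) atBot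
      (𝓝 (-∫ s in Ioi (0:ℝ), cosh (s / 2) ^ (8 / κ - 2))) :=
    (htop.comp tendsto_neg_atBot_atTop).neg.congr fun x => by
      simp only [Function.comp_apply, id, hodd, neg_neg]
  refine ⟨hint, hodd, hmono, hint.integrableOn, hmono.range_eq_Ioo_of_tendsto ?_ hbot htop,
    fun x => ?_⟩
  · exact intervalIntegral.continuous_primitive hcont.intervalIntegrable 0
  · rw [funext (Continuous.deriv_integral _ hcont 0), deriv_rpow_cosh_half]
    field_simp
    ring
end
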